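/- arXiv:2302.03186 — 3 statements merged into one kernel-verified Lean document; each statement's English description precedes it below -/
import Mathlib

section
/- Let Z_1, …, Z_N be i.i.d. random variables, each distributed as the product X·Y of independent nonnegative random variables with X^2 exponentially distributed with mean l_i > 0 and Y^2 exponentially distributed with mean l_r > 0. Then E[(Z_1 + ⋯ + Z_N)^2] = [ (π^2/16)·N^2 + (1 − π^2/16)·N ]·l_i·l_r = G_bf·l_i·l_r. -/
/-!
If `W ≥ 0` and `W²` is exponential with mean `l`, then `E[W^s] = l^(s/2) Γ(s/2 + 1)`, so
`E[W] = √(π l) / 2` and `E[W²] = l`. Independence of `X` and `Y` then gives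
`E[XY] = (π / 4) √(l_i l_r)` and `E[(XY)²] = l_i l_r`. For a sum `S` of `N` pairwise independent
copies of `XY`, `E[S²] = Var S + (E S)² = N Var(XY) + N² E[XY]²`, which is
`N (1 - π²/16) l_i l_r + N² (π²/16) l_i l_r`.
-/

open MeasureTheory ProbabilityTheory Real Set
open scoped ENNReal

section ExponentialMoments

variable {r : ℝ}

lemma exponentialPDFReal_eq (r x : ℝ) :
    exponentialPDFReal r x = if 0 ≤ x then r * exp (-(r * x)) else 0 := by
  simp only [exponentialPDFReal, gammaPDFReal, rpow_one, Gamma_one, div_one, sub_self, rpow_zero,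
    mul_one]

lemma exponentialPDFReal_smul_eq_indicator (hr : 0 < r) (f : ℝ → ℝ) :
    (fun x => (exponentialPDFReal r x).toNNReal • f x)
      = (Ici 0).indicator (fun x => r * exp (-(r * x)) * f x) := by
  ext x
  rw [NNReal.smul_def, Real.coe_toNNReal _ (exponentialPDFReal_nonneg hr x),
    exponentialPDFReal_eq, smul_eq_mul]
  by_cases hx : 0 ≤ x <;> simp [hx]

lemma expMeasure_eq_withDensity (r : ℝ) :
    expMeasure r = volume.withDensity (fun x => ((exponentialPDFReal r x).toNNReal : ℝ≥0∞)) :=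
  rfl

lemma integrable_expMeasure_iff (hr : 0 < r) {f : ℝ → ℝ} :
    Integrable f (expMeasure r) ↔ IntegrableOn (fun x => r * exp (-(r * x)) * f x) (Ioi 0) := by
  rw [expMeasure_eq_withDensity, integrable_withDensity_iff_integrable_smul
      (measurable_exponentialPDFReal r).real_toNNReal,
    exponentialPDFReal_smul_eq_indicator hr, integrable_indicator_iff measurableSet_Ici,
    integrableOn_Ici_iff_integrableOn_Ioi]

lemma integral_expMeasure (hr : 0 < r) (f : ℝ → ℝ) :
    ∫ x, f x ∂expMeasure r = ∫ x in Ioi 0, r * exp (-(r * x)) * f x := by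
  rw [expMeasure_eq_withDensity, integral_withDensity_eq_integral_smul
      (measurable_exponentialPDFReal r).real_toNNReal,
    exponentialPDFReal_smul_eq_indicator hr, integral_indicator measurableSet_Ici,
    integral_Ici_eq_integral_Ioi]

variable {s : ℝ}

lemma integrable_rpow_expMeasure (hr : 0 < r) (hs : -1 < s) :
    Integrable (fun x => x ^ s) (expMeasure r) := by
  rw [integrable_expMeasure_iff hr]
  refine IntegrableOn.congr_fun ((integrableOn_rpow_mul_exp_neg_mul_rpow hs one_pos hr).const_mul r)
    (fun x _ => ?_) measurableSet_Ioi
  simp only [rpow_one]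
  ring_nf

lemma integral_rpow_expMeasure (hr : 0 < r) (hs : -1 < s) :
    ∫ x, x ^ s ∂expMeasure r = (1 / r) ^ s * Gamma (s + 1) := by
  have h := integral_rpow_mul_exp_neg_mul_Ioi (a := s + 1) (by linarith) hr
  rw [add_sub_cancel_right] at h
  calc ∫ x, x ^ s ∂expMeasure r
      = r * ∫ x in Ioi 0, x ^ s * exp (-(r * x)) := by
        rw [integral_expMeasure hr, ← integral_const_mul]
        refine setIntegral_congr_fun measurableSet_Ioi fun x _ => by ring
    _ = (1 / r) ^ s * Gamma (s + 1) := by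
        rw [h, rpow_add_one (by positivity)]
        field_simp

end ExponentialMoments

section SqrtExponential

variable {Ω : Type*} {mΩ : MeasurableSpace Ω} {μ : Measure Ω} {W : Ω → ℝ} {l : ℝ}

lemma ProbabilityTheory.HasLaw.integrable_comp {𝓧 : Type*} {m𝓧 : MeasurableSpace 𝓧}
    {ν : Measure 𝓧} {X : Ω → 𝓧} (hX : HasLaw X ν μ) {f : 𝓧 → ℝ} (hf : Integrable f ν) :
    Integrable (fun ω => f (X ω)) μ := by
  rw [← hX.map_eq] at hf
  exact hf.comp_aemeasurable hX.aemeasurable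

lemma integral_sq_of_hasLaw_sq_expMeasure (hl : 0 < l)
    (hW : HasLaw (fun ω => W ω ^ 2) (expMeasure (1 / l)) μ) :
    ∫ ω, W ω ^ 2 ∂μ = l := by
  refine hW.integral_eq.trans ?_
  simpa [one_add_one_eq_two, Gamma_two] using
    integral_rpow_expMeasure (one_div_pos.2 hl) (s := 1) (by norm_num)

lemma memLp_two_of_hasLaw_sq_expMeasure (hl : 0 < l) (hW0 : ∀ ω, 0 ≤ W ω)
    (hW : HasLaw (fun ω => W ω ^ 2) (expMeasure (1 / l)) μ) :
    MemLp W 2 μ := by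
  have hsqrt : (fun ω => √(W ω ^ 2)) = W := funext fun ω => sqrt_sq (hW0 ω)
  have hWm : AEMeasurable W μ := hsqrt ▸ hW.aemeasurable.sqrt
  refine (memLp_two_iff_integrable_sq hWm.aestronglyMeasurable).2 ?_
  have hid : Integrable (fun x => x) (expMeasure (1 / l)) := by
    simpa using integrable_rpow_expMeasure (one_div_pos.2 hl) (s := 1) (by norm_num)
  simpa using hW.integrable_comp hid

lemma integral_of_hasLaw_sq_expMeasure (hl : 0 < l) (hW0 : ∀ ω, 0 ≤ W ω)
    (hW : HasLaw (fun ω => W ω ^ 2) (expMeasure (1 / l)) μ) :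
    ∫ ω, W ω ∂μ = √π / 2 * √l := by
  have hsqrt : (fun ω => √(W ω ^ 2)) = W := funext fun ω => sqrt_sq (hW0 ω)
  have hGamma : Gamma (1 / 2 + 1) = √π / 2 := by
    rw [Gamma_add_one (by norm_num), Gamma_one_half_eq]; ring
  rw [← hsqrt, ← Function.comp_def, hW.integral_comp continuous_sqrt.aestronglyMeasurable]
  simp_rw [sqrt_eq_rpow]
  rw [integral_rpow_expMeasure (one_div_pos.2 hl) (by norm_num), hGamma, one_div_one_div,
    sqrt_eq_rpow]
  ring

end SqrtExponential

section Moments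

variable {Ω : Type*} {mΩ : MeasurableSpace Ω} {μ : Measure Ω}

lemma hasLaw_expMeasure_of_map_eq {r : ℝ} (hr : 0 < r) {X : Ω → ℝ}
    (h : μ.map X = expMeasure r) : HasLaw X (expMeasure r) μ :=
  have := isProbabilityMeasure_expMeasure hr
  ⟨.of_map_ne_zero (h ▸ IsProbabilityMeasure.ne_zero _), h⟩

variable {X Y : Ω → ℝ}

lemma ProbabilityTheory.IndepFun.memLp_two_fun_mul (h : X ⟂ᵢ[μ] Y) (hX : MemLp X 2 μ)
    (hY : MemLp Y 2 μ) : MemLp (fun ω => X ω * Y ω) 2 μ := by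
  refine (memLp_two_iff_integrable_sq (hX.1.mul hY.1)).2 ?_
  simp only [Pi.mul_apply, mul_pow]
  exact (h.comp (measurable_id.pow_const 2) (measurable_id.pow_const 2)).integrable_mul
    hX.integrable_sq hY.integrable_sq

lemma ProbabilityTheory.IndepFun.integral_fun_mul_sq (h : X ⟂ᵢ[μ] Y) (hX : AEMeasurable X μ)
    (hY : AEMeasurable Y μ) :
    ∫ ω, (X ω * Y ω) ^ 2 ∂μ = (∫ ω, X ω ^ 2 ∂μ) * ∫ ω, Y ω ^ 2 ∂μ := by
  simp_rw [mul_pow]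
  exact h.integral_fun_comp_mul_comp hX hY (f := (· ^ 2)) (g := (· ^ 2))
    (continuous_pow 2).aestronglyMeasurable (continuous_pow 2).aestronglyMeasurable

lemma identDistrib_of_map_eq [IsProbabilityMeasure μ] {β : Type*} [MeasurableSpace β]
    {f g : Ω → β} (hg : AEMeasurable g μ) (h : μ.map f = μ.map g) : IdentDistrib f g μ μ where
  aemeasurable_fst := .of_map_ne_zero <| h ▸ (Measure.isProbabilityMeasure_map hg).ne_zero
  aemeasurable_snd := hg
  map_eq := h

lemma integral_sq_sum_of_identDistrib [IsProbabilityMeasure μ] {ι : Type*} {s : Finset ι}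
    {Z : ι → Ω → ℝ} (hX : MemLp X 2 μ) (hZ : ∀ i ∈ s, IdentDistrib (Z i) X μ μ)
    (hindep : Set.Pairwise s fun i j => Z i ⟂ᵢ[μ] Z j) :
    ∫ ω, (∑ i ∈ s, Z i ω) ^ 2 ∂μ = s.card * Var[X; μ] + (s.card * μ[X]) ^ 2 := by
  have hZ2 : ∀ i ∈ s, MemLp (Z i) 2 μ := fun i hi => (hZ i hi).memLp_iff.2 hX
  have hvar := variance_eq_sub (memLp_finsetSum' s hZ2)
  simp only [Pi.pow_apply, Finset.sum_apply] at hvar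
  rw [IndepFun.variance_sum hZ2 hindep, Finset.sum_congr rfl fun i hi => (hZ i hi).variance_eq,
    integral_finsetSum s fun i hi => (hZ2 i hi).integrable one_le_two,
    Finset.sum_congr rfl fun i hi => (hZ i hi).integral_eq] at hvar
  simp only [Finset.sum_const, nsmul_eq_mul] at hvar
  linarith

end Moments

/-- reflect-beamforming gain.
If `Z 1, …, Z N` are i.i.d., each distributed as the product `X·Y` of
independent nonnegative random variables with `X²` exponential of mean
`l_i > 0` and `Y²` exponential of mean `l_r > 0`, then
`E[(Z 1 + ⋯ + Z N)²] = ((π²/16)N² + (1 − π²/16)N)·l_i·l_r = G_bf·l_i·l_r`. -/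
theorem stmt_5 {Ω : Type*} [MeasureSpace Ω] [IsProbabilityMeasure (ℙ : Measure Ω)]
    (N : ℕ) (Z : Fin N → Ω → ℝ) (X Y : Ω → ℝ)
    (li lr : ℝ) (hli : 0 < li) (hlr : 0 < lr)
    (hX0 : ∀ ω, 0 ≤ X ω) (hY0 : ∀ ω, 0 ≤ Y ω)
    (hXYindep : IndepFun X Y ℙ)
    (hX : Measure.map (fun ω => X ω ^ 2) ℙ = expMeasure (1 / li))
    (hY : Measure.map (fun ω => Y ω ^ 2) ℙ = expMeasure (1 / lr))
    (hZindep : iIndepFun Z ℙ)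
    (hZdist : ∀ n, Measure.map (Z n) ℙ = Measure.map (fun ω => X ω * Y ω) ℙ) :
    ∫ ω, (∑ n, Z n ω) ^ 2 ∂ℙ
      = (π ^ 2 / 16 * N ^ 2 + (1 - π ^ 2 / 16) * N) * (li * lr) := by
  have hXlaw := hasLaw_expMeasure_of_map_eq (one_div_pos.2 hli) hX
  have hYlaw := hasLaw_expMeasure_of_map_eq (one_div_pos.2 hlr) hY
  have hX2 := memLp_two_of_hasLaw_sq_expMeasure hli hX0 hXlaw
  have hY2 := memLp_two_of_hasLaw_sq_expMeasure hlr hY0 hYlaw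
  have hXY2 := hXYindep.memLp_two_fun_mul hX2 hY2
  have hZ n (_ : n ∈ Finset.univ) := identDistrib_of_map_eq hXY2.aemeasurable (hZdist n)
  rw [integral_sq_sum_of_identDistrib hXY2 hZ fun i _ j _ hij => hZindep.indepFun hij,
    variance_eq_sub hXY2]
  simp only [Pi.pow_apply, Finset.card_univ, Fintype.card_fin]
  rw [hXYindep.integral_fun_mul_sq hX2.aemeasurable hY2.aemeasurable,
    hXYindep.integral_fun_mul_eq_mul_integral hX2.1 hY2.1,
    integral_sq_of_hasLaw_sq_expMeasure hli hXlaw, integral_sq_of_hasLaw_sq_expMeasure hlr hYlaw,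
    integral_of_hasLaw_sq_expMeasure hli hX0 hXlaw, integral_of_hasLaw_sq_expMeasure hlr hY0 hYlaw]
  simp only [mul_pow, div_pow, sq_sqrt pi_pos.le, sq_sqrt hli.le, sq_sqrt hlr.le]
  ring
end

section
/- Let W be a nonnegative real random variable on a probability space, let τ ≥ 1 be an integer, and let G be a Gamma(τ, 1)-distributed random variable independent of W. Define the Laplace transform L(s) = E[e^{−sW}] for s > 0. Then L is infinitely differentiable on (0, ∞), its i-th derivative satisfies L^{(i)}(s) = E[(−W)^i e^{−sW}], and P(G > W) = Σ_{i=0}^{τ−1} ((−1)^i / i!) · L^{(i)}(1). -/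
open MeasureTheory ProbabilityTheory
open Real Set Filter


-- bound: w^k e^{-aw} ≤ k!/a^k
lemma aux_pow_exp_le (k : ℕ) {a w : ℝ} (ha : 0 < a) (hw : 0 ≤ w) :
    w ^ k * Real.exp (-(a * w)) ≤ k.factorial / a ^ k := by
  have h1 : (a * w) ^ k / k.factorial ≤ Real.exp (a * w) := by
    refine le_trans ?_ (Real.sum_le_exp_of_nonneg (by positivity) (k + 1))
    refine Finset.single_le_sum (f := fun i => (a*w)^i / i.factorial) ?_ (Finset.self_mem_range_succ k)
    intro i _; positivity
  have hk : (0:ℝ) < k.factorial := by exact_mod_cast k.factorial_pos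
  have he : (0:ℝ) < Real.exp (a * w) := Real.exp_pos _
  have hak : (0:ℝ) < a ^ k := pow_pos ha k
  have h2 : (a * w) ^ k ≤ Real.exp (a*w) * k.factorial := (div_le_iff₀ hk).1 h1
  rw [Real.exp_neg, le_div_iff₀ hak]
  calc w ^ k * (Real.exp (a*w))⁻¹ * a ^ k = (a*w)^k * (Real.exp (a*w))⁻¹ := by rw [mul_pow]; ring
    _ ≤ (Real.exp (a*w) * k.factorial) * (Real.exp (a*w))⁻¹ := by
        apply mul_le_mul_of_nonneg_right h2 (by positivity)
    _ = k.factorial := by field_simp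

section helpers
variable {Ω : Type*} [MeasurableSpace Ω] {μ : Measure Ω} [IsProbabilityMeasure μ]
  {W : Ω → ℝ}

lemma aux_integrable (hWmeas : Measurable W) (hW0 : ∀ ω, 0 ≤ W ω) (k : ℕ) {s : ℝ}
    (hs : 0 < s) : Integrable (fun ω => (W ω) ^ k * Real.exp (-(s * W ω))) μ := by
  refine Integrable.mono' (integrable_const ((k.factorial : ℝ) / s ^ k))
    ((hWmeas.pow_const k).mul ((hWmeas.const_mul s).neg.exp)).aestronglyMeasurable
    (ae_of_all _ fun ω => ?_)
  have h0 := hW0 ω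
  rw [Real.norm_eq_abs, abs_of_nonneg (by positivity)]
  exact aux_pow_exp_le k hs (hW0 ω)

lemma aux_integrable_neg (hWmeas : Measurable W) (hW0 : ∀ ω, 0 ≤ W ω) (k : ℕ) {s : ℝ}
    (hs : 0 < s) : Integrable (fun ω => (-W ω) ^ k * Real.exp (-(s * W ω))) μ := by
  have := (aux_integrable hWmeas hW0 k hs (μ := μ)).const_mul ((-1:ℝ)^k)
  refine this.congr (ae_of_all _ fun ω => ?_)
  rw [neg_pow]; ring

lemma aux_hasDerivAt (hWmeas : Measurable W) (hW0 : ∀ ω, 0 ≤ W ω) (i : ℕ) {s : ℝ}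
    (hs : 0 < s) :
    HasDerivAt (fun s => ∫ ω, (-W ω) ^ i * Real.exp (-(s * W ω)) ∂μ)
      (∫ ω, (-W ω) ^ (i+1) * Real.exp (-(s * W ω)) ∂μ) s := by
  have h2 : (0:ℝ) < s/2 := by linarith
  refine (hasDerivAt_integral_of_dominated_loc_of_deriv_le (Metric.ball_mem_nhds s h2)
    (F := fun x ω => (-W ω) ^ i * Real.exp (-(x * W ω)))
    (F' := fun x ω => (-W ω) ^ (i+1) * Real.exp (-(x * W ω)))
    (bound := fun _ => ((i+1).factorial : ℝ) / (s/2) ^ (i+1))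
    ?_ (aux_integrable_neg hWmeas hW0 i hs) ?_ ?_ (integrable_const _) ?_).2
  · filter_upwards with x
    exact (((hWmeas.neg.pow_const i).mul ((hWmeas.const_mul x).neg.exp))).aestronglyMeasurable
  · exact (((hWmeas.neg.pow_const (i+1)).mul ((hWmeas.const_mul s).neg.exp))).aestronglyMeasurable
  · refine ae_of_all _ fun ω => fun x hx => ?_
    have hxs : s/2 < x := by
      have := abs_sub_lt_iff.1 (by simpa [Real.dist_eq] using hx)
      linarith [this.2]
    have h1 : ‖(-W ω) ^ (i+1) * Real.exp (-(x * W ω))‖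
        = (W ω) ^ (i+1) * Real.exp (-(x * W ω)) := by
      rw [Real.norm_eq_abs, abs_mul, abs_pow, abs_neg, abs_of_nonneg (hW0 ω),
        abs_of_nonneg (Real.exp_nonneg _)]
    rw [h1]
    calc (W ω) ^ (i+1) * Real.exp (-(x * W ω))
        ≤ (W ω) ^ (i+1) * Real.exp (-(s/2 * W ω)) := by
          have h0 := hW0 ω
          apply mul_le_mul_of_nonneg_left _ (by positivity)
          apply Real.exp_le_exp.2
          simp only [neg_le_neg_iff]
          exact mul_le_mul_of_nonneg_right hxs.le (hW0 ω)
      _ ≤ ((i+1).factorial : ℝ) / (s/2) ^ (i+1) := aux_pow_exp_le (i+1) h2 (hW0 ω)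
  · refine ae_of_all _ fun ω x hx => ?_
    have : HasDerivAt (fun x => Real.exp (-(x * W ω))) (Real.exp (-(x * W ω)) * (-W ω)) x :=
      ((hasDerivAt_mul_const (W ω)).neg.exp (x := x))
    have := this.const_mul ((-W ω) ^ i)
    refine this.congr_deriv ?_
    show _ = (-W ω) ^ (i+1) * Real.exp (-(x * W ω))
    rw [pow_succ]; ring

end helpers

section helpers2
variable {Ω : Type*} [MeasurableSpace Ω] {μ : Measure Ω} [IsProbabilityMeasure μ]
  {W : Ω → ℝ}

lemma aux_iterderiv (hWmeas : Measurable W) (hW0 : ∀ ω, 0 ≤ W ω) (i : ℕ) :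
    ∀ s : ℝ, 0 < s →
      iteratedDerivWithin i (fun s => ∫ ω, Real.exp (-(s * W ω)) ∂μ) (Set.Ioi 0) s
        = ∫ ω, (-W ω) ^ i * Real.exp (-(s * W ω)) ∂μ := by
  induction i with
  | zero => intro s hs; simp
  | succ i ih =>
    intro s hs
    rw [iteratedDerivWithin_succ,
      derivWithin_of_isOpen isOpen_Ioi hs]
    have hev : (fun t => iteratedDerivWithin i (fun s => ∫ ω, Real.exp (-(s * W ω)) ∂μ)
        (Set.Ioi 0) t) =ᶠ[nhds s] (fun t => ∫ ω, (-W ω) ^ i * Real.exp (-(t * W ω)) ∂μ) := by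
      filter_upwards [isOpen_Ioi.mem_nhds hs] with t ht
      exact ih t ht
    rw [hev.deriv_eq]
    exact (aux_hasDerivAt hWmeas hW0 i hs).deriv

end helpers2

section helpers3
variable {Ω : Type*} [MeasurableSpace Ω] {μ : Measure Ω} [IsProbabilityMeasure μ]
  {W : Ω → ℝ}

lemma aux_cmeas (hWmeas : Measurable W) (x : ℂ) :
    Measurable (fun ω => Complex.exp (-(x * (W ω : ℂ)))) :=
  Complex.measurable_exp.comp (((Complex.measurable_ofReal.comp hWmeas).const_mul x).neg)

lemma aux_cnorm (hW0 : ∀ ω, 0 ≤ W ω) (x : ℂ) (ω : Ω) :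
    ‖Complex.exp (-(x * (W ω : ℂ)))‖ = Real.exp (-(x.re * W ω)) := by
  rw [Complex.norm_exp]
  congr 1
  simp [Complex.mul_re]

lemma aux_cint (hWmeas : Measurable W) (hW0 : ∀ ω, 0 ≤ W ω) {x : ℂ} (hx : 0 < x.re) :
    Integrable (fun ω => Complex.exp (-(x * (W ω : ℂ)))) μ := by
  refine Integrable.mono' (integrable_const (1:ℝ))
    (aux_cmeas hWmeas x).aestronglyMeasurable (ae_of_all _ fun ω => ?_)
  rw [aux_cnorm hW0 x ω]
  have h0 : 0 ≤ x.re * W ω := mul_nonneg hx.le (hW0 ω)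
  calc Real.exp (-(x.re * W ω)) ≤ Real.exp 0 := Real.exp_le_exp.2 (by linarith)
    _ = 1 := Real.exp_zero

lemma aux_analytic (hWmeas : Measurable W) (hW0 : ∀ ω, 0 ≤ W ω) :
    AnalyticOnNhd ℂ (fun z => ∫ ω, Complex.exp (-(z * (W ω : ℂ))) ∂μ) {z : ℂ | 0 < z.re} := by
  refine DifferentiableOn.analyticOnNhd (fun z hz => ?_)
    (isOpen_lt continuous_const Complex.continuous_re)
  have hz : 0 < z.re := hz
  have h2 : (0:ℝ) < z.re / 2 := by linarith
  have hder : HasDerivAt (fun z => ∫ ω, Complex.exp (-(z * (W ω : ℂ))) ∂μ)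
      (∫ ω, -(W ω : ℂ) * Complex.exp (-(z * (W ω : ℂ))) ∂μ) z := by
    refine (hasDerivAt_integral_of_dominated_loc_of_deriv_le (Metric.ball_mem_nhds z h2)
      (F := fun x ω => Complex.exp (-(x * (W ω : ℂ))))
      (F' := fun x ω => -(W ω : ℂ) * Complex.exp (-(x * (W ω : ℂ))))
      (bound := fun _ => ((1:ℕ).factorial : ℝ) / (z.re/2) ^ 1)
      ?_ (aux_cint hWmeas hW0 hz) ?_ ?_ (integrable_const _) ?_).2
    · filter_upwards with x
      exact (aux_cmeas hWmeas x).aestronglyMeasurable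
    · exact (((Complex.measurable_ofReal.comp hWmeas).neg).mul
        (aux_cmeas hWmeas z)).aestronglyMeasurable
    · refine ae_of_all _ fun ω x hx => ?_
      have hxre : z.re/2 < x.re := by
        have h1 : |x.re - z.re| ≤ ‖x - z‖ := by
          rw [← Complex.sub_re]; exact Complex.abs_re_le_norm _
        have h2' : ‖x - z‖ < z.re/2 := by simpa [dist_eq_norm] using hx
        have := abs_sub_lt_iff.1 (lt_of_le_of_lt h1 h2')
        linarith [this.2]
      rw [norm_mul, aux_cnorm hW0 x ω]
      have hn : ‖-(W ω : ℂ)‖ = W ω := by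
        rw [norm_neg, Complex.norm_real, Real.norm_eq_abs, abs_of_nonneg (hW0 ω)]
      rw [hn]
      calc W ω * Real.exp (-(x.re * W ω))
          ≤ W ω * Real.exp (-(z.re/2 * W ω)) := by
            apply mul_le_mul_of_nonneg_left _ (hW0 ω)
            exact Real.exp_le_exp.2 (by nlinarith [hW0 ω])
        _ ≤ ((1:ℕ).factorial : ℝ) / (z.re/2) ^ 1 := by
            simpa [pow_one] using aux_pow_exp_le 1 h2 (hW0 ω)
    · refine ae_of_all _ fun ω x hx => ?_
      have := ((hasDerivAt_mul_const ((W ω : ℂ))).neg.cexp (x := x))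
      refine this.congr_deriv ?_
      simp only [Pi.neg_apply]
      ring_nf
  exact hder.differentiableAt.differentiableWithinAt

lemma aux_L_eq (hWmeas : Measurable W) (s : ℝ) :
    (∫ ω, Real.exp (-(s * W ω)) ∂μ)
      = ((∫ ω, Complex.exp (-((s:ℂ) * (W ω : ℂ))) ∂μ) : ℂ).re := by
  have : (fun ω => Complex.exp (-((s:ℂ) * (W ω : ℂ))))
      = fun ω => ((Real.exp (-(s * W ω)) : ℝ) : ℂ) := by
    funext ω; rw [Complex.ofReal_exp]; push_cast; ring_nf
  have h2 := integral_ofReal (𝕜 := ℂ) (f := fun ω => Real.exp (-(s * W ω))) (μ := μ)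
  erw [this, h2, Complex.ofReal_re]; simp

lemma aux_contDiffOn (hWmeas : Measurable W) (hW0 : ∀ ω, 0 ≤ W ω) :
    ContDiffOn ℝ (⊤ : ℕ∞) (fun s => ∫ ω, Real.exp (-(s * W ω)) ∂μ) (Set.Ioi 0) := by
  have hF := aux_analytic (μ := μ) hWmeas hW0
  have hcomp : AnalyticOnNhd ℝ
      (fun s : ℝ => Complex.reCLM ((fun z => ∫ ω, Complex.exp (-(z * (W ω : ℂ))) ∂μ)
        (Complex.ofRealCLM s))) (Set.Ioi 0) := by
    refine (Complex.reCLM.analyticOnNhd Set.univ).comp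
      ((hF.restrictScalars).comp (Complex.ofRealCLM.analyticOnNhd _) ?_) ?_
    · intro s hs; simpa using hs
    · intro z _; trivial
  refine ContDiffOn.of_le ?_ (le_top : ((⊤ : ℕ∞) : WithTop ℕ∞) ≤ ⊤)
  rw [contDiffOn_omega_iff_analyticOn (uniqueDiffOn_Ioi 0)]
  refine (hcomp.analyticOn).congr ?_
  intro s hs
  exact (aux_L_eq hWmeas s)

end helpers3

section tail

lemma aux_sum_deriv (n : ℕ) (x : ℝ) :
    HasDerivAt (fun x : ℝ => ∑ i ∈ Finset.range (n+1), x ^ i / i.factorial)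
      (∑ i ∈ Finset.range n, x ^ i / i.factorial) x := by
  have h : HasDerivAt (fun x : ℝ => ∑ i ∈ Finset.range (n+1), x ^ i / i.factorial)
      (∑ i ∈ Finset.range (n+1), (i : ℝ) * x ^ (i-1) / i.factorial) x := by
    refine HasDerivAt.fun_sum fun i _ => ?_
    exact (hasDerivAt_pow i x).div_const _
  convert h using 1
  rw [Finset.sum_range_succ' (fun i => (i:ℝ) * x ^ (i-1) / i.factorial) n]
  simp only [Nat.cast_zero, zero_mul, Nat.factorial_zero, Nat.cast_one, zero_div, add_zero]
  refine Finset.sum_congr rfl fun i _ => ?_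
  rw [Nat.factorial_succ, Nat.add_sub_cancel]
  push_cast
  have hi : ((i:ℝ)+1) ≠ 0 := by positivity
  field_simp

lemma aux_phi_deriv (n : ℕ) (x : ℝ) :
    HasDerivAt (fun x : ℝ => -(Real.exp (-x) * ∑ i ∈ Finset.range (n+1), x ^ i / i.factorial))
      (x ^ n * Real.exp (-x) / n.factorial) x := by
  have he : HasDerivAt (fun x : ℝ => Real.exp (-x)) (Real.exp (-x) * (-1)) x :=
    (hasDerivAt_id x).neg.exp
  have h := ((he.fun_mul (aux_sum_deriv n x))).fun_neg
  refine h.congr_deriv ?_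
  rw [Finset.sum_range_succ]
  field_simp
  ring

lemma aux_tendsto (n : ℕ) :
    Filter.Tendsto (fun x : ℝ => -(Real.exp (-x) * ∑ i ∈ Finset.range (n+1), x ^ i / i.factorial))
      atTop (nhds 0) := by
  have h : ∀ x : ℝ, -(Real.exp (-x) * ∑ i ∈ Finset.range (n+1), x ^ i / i.factorial)
      = -(∑ i ∈ Finset.range (n+1), (x ^ i * Real.exp (-x)) / i.factorial) := by
    intro x
    rw [Finset.mul_sum]
    congr 1
    exact Finset.sum_congr rfl fun i _ => by ring
  simp only [h]
  have : Filter.Tendsto (fun x : ℝ => ∑ i ∈ Finset.range (n+1), (x ^ i * Real.exp (-x)) / i.factorial)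
      atTop (nhds (∑ i ∈ Finset.range (n+1), (0:ℝ))) := by
    refine tendsto_finset_sum _ fun i _ => ?_
    simpa using (Real.tendsto_pow_mul_exp_neg_atTop_nhds_zero i).div_const (i.factorial : ℝ)
  simpa using this.neg

lemma aux_integrableOn (n : ℕ) {w : ℝ} (hw : 0 ≤ w) :
    IntegrableOn (fun x => x ^ n * Real.exp (-x) / n.factorial) (Set.Ioi w) := by
  refine Integrable.mono' ((exp_neg_integrableOn_Ioi w (by norm_num : (0:ℝ) < 1/2)).const_mul
    (2 ^ n)) (((measurable_id.pow_const n).mul measurable_id.neg.exp).div_const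
      _).aestronglyMeasurable ?_
  rw [ae_restrict_iff' measurableSet_Ioi]
  refine ae_of_all _ fun x hx => ?_
  have hx0 : 0 ≤ x := le_trans hw (le_of_lt hx)
  have hb := aux_pow_exp_le n (a := 1/2) one_half_pos hx0
  have hfac : (0:ℝ) < n.factorial := by exact_mod_cast n.factorial_pos
  rw [Real.norm_eq_abs, abs_of_nonneg (by positivity)]
  have hexp : Real.exp (-x) = Real.exp (-(1/2 * x)) * Real.exp (-(1/2 * x)) := by
    rw [← Real.exp_add]; ring_nf
  rw [hexp]
  have h1 : x ^ n * Real.exp (-(1/2 * x)) ≤ n.factorial * 2 ^ n := by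
    calc x ^ n * Real.exp (-(1/2 * x)) ≤ (n.factorial : ℝ) / (1/2 : ℝ) ^ n := hb
      _ = n.factorial * 2 ^ n := by field_simp; rw [← mul_pow]; norm_num
  calc x ^ n * (Real.exp (-(1/2 * x)) * Real.exp (-(1/2 * x))) / n.factorial
      = (x ^ n * Real.exp (-(1/2 * x))) * Real.exp (-(1/2 * x)) / n.factorial := by ring
    _ ≤ (n.factorial * 2 ^ n) * Real.exp (-(1/2 * x)) / n.factorial := by
        gcongr
    _ = 2 ^ n * Real.exp (-(1/2) * x) := by field_simp

lemma aux_tail_integral (n : ℕ) {w : ℝ} (hw : 0 ≤ w) :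
    ∫ x in Set.Ioi w, x ^ n * Real.exp (-x) / n.factorial
      = Real.exp (-w) * ∑ i ∈ Finset.range (n+1), w ^ i / i.factorial := by
  have h := integral_Ioi_of_hasDerivAt_of_tendsto'
    (f := fun x : ℝ => -(Real.exp (-x) * ∑ i ∈ Finset.range (n+1), x ^ i / i.factorial))
    (f' := fun x => x ^ n * Real.exp (-x) / n.factorial)
    (fun x _ => aux_phi_deriv n x) (aux_integrableOn n hw) (aux_tendsto n)
  rw [h]; ring

lemma aux_gamma_tail (τ : ℕ) (hτ : 1 ≤ τ) {w : ℝ} (hw : 0 ≤ w) :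
    gammaMeasure (τ : ℝ) 1 (Set.Ioi w)
      = ENNReal.ofReal (Real.exp (-w) * ∑ i ∈ Finset.range τ, w ^ i / i.factorial) := by
  obtain ⟨n, rfl⟩ : ∃ n, τ = n + 1 := ⟨τ - 1, (Nat.succ_pred_eq_of_pos hτ).symm⟩
  rw [gammaMeasure, withDensity_apply _ measurableSet_Ioi]
  have key : ∀ᵐ x ∂(volume : Measure ℝ), x ∈ Set.Ioi w →
      gammaPDF ((n+1 : ℕ) : ℝ) 1 x = ENNReal.ofReal (x ^ n * Real.exp (-x) / n.factorial) := by
    refine ae_of_all _ fun x hx => ?_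
    have hx0 : 0 ≤ x := le_trans hw (le_of_lt hx)
    rw [gammaPDF_of_nonneg hx0]
    congr 1
    have hcast : (((n+1 : ℕ) : ℝ)) - 1 = (n : ℝ) := by push_cast; ring
    rw [Real.one_rpow, hcast, Real.rpow_natCast]
    have hg : Real.Gamma ((n+1 : ℕ) : ℝ) = n.factorial := by
      push_cast
      exact_mod_cast Real.Gamma_nat_eq_factorial n
    rw [hg, one_mul]
    ring_nf
  rw [setLIntegral_congr_fun_ae (μ := volume) measurableSet_Ioi key,
    ← ofReal_integral_eq_lintegral_ofReal (aux_integrableOn n hw) ?_,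
    aux_tail_integral n hw]
  rw [Filter.EventuallyLE, ae_restrict_iff' measurableSet_Ioi]
  refine ae_of_all _ fun x hx => ?_
  have hx0 : 0 ≤ x := le_trans hw (le_of_lt hx)
  positivity

end tail


/-- coverage under integer-shape Gamma signal, eq. (24).
Let `W ≥ 0` be a random variable, `τ ≥ 1` an integer, and `G` a `Gamma(τ,1)`
random variable independent of `W`.  With `L s = E[e^{−sW}]`, the Laplace
transform `L` is infinitely differentiable on `(0,∞)`, its `i`-th derivative
is `E[(−W)^i e^{−sW}]`, and
`P(G > W) = Σ_{i=0}^{τ−1} ((−1)^i/i!)·L^{(i)}(1)`. -/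
theorem stmt_12 {Ω : Type*} [MeasureSpace Ω] [IsProbabilityMeasure (ℙ : Measure Ω)]
    (W G : Ω → ℝ) (τ : ℕ) (hτ : 1 ≤ τ)
    (hW0 : ∀ ω, 0 ≤ W ω) (hWmeas : Measurable W)
    (hG : Measure.map G ℙ = gammaMeasure τ 1)
    (hindep : IndepFun W G ℙ) :
    ContDiffOn ℝ (⊤ : ℕ∞) (fun s => ∫ ω, Real.exp (-(s * W ω)) ∂ℙ) (Set.Ioi 0) ∧
    (∀ (i : ℕ) (s : ℝ), 0 < s →
      iteratedDerivWithin i (fun s => ∫ ω, Real.exp (-(s * W ω)) ∂ℙ)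
          (Set.Ioi 0) s
        = ∫ ω, (-W ω) ^ i * Real.exp (-(s * W ω)) ∂ℙ) ∧
    (ℙ {ω | W ω < G ω}).toReal
      = ∑ i ∈ Finset.range τ, (-1 : ℝ) ^ i / (Nat.factorial i)
          * iteratedDerivWithin i (fun s => ∫ ω, Real.exp (-(s * W ω)) ∂ℙ)
              (Set.Ioi 0) 1 := by

  refine ⟨aux_contDiffOn hWmeas hW0, fun i s hs => aux_iterderiv hWmeas hW0 i s hs, ?_⟩
  -- Part 3
  have hGP : IsProbabilityMeasure (gammaMeasure (τ : ℝ) 1) :=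
    isProbabilityMeasure_gammaMeasure (by exact_mod_cast Nat.lt_of_lt_of_le Nat.zero_lt_one hτ) one_pos
  have hGae : AEMeasurable G ℙ := by
    by_contra h
    rw [Measure.map_of_not_aemeasurable h] at hG
    have h1 := hGP.measure_univ
    rw [← hG] at h1
    simp at h1
  have hmap := (indepFun_iff_map_prod_eq_prod_map_map hWmeas.aemeasurable hGae).1 hindep
  have hsetmeas : MeasurableSet {p : ℝ × ℝ | p.1 < p.2} :=
    measurableSet_lt measurable_fst measurable_snd
  have hset : ℙ {ω | W ω < G ω} = (Measure.map (fun ω => (W ω, G ω)) ℙ) {p : ℝ × ℝ | p.1 < p.2} := by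
    rw [Measure.map_apply_of_aemeasurable (hWmeas.aemeasurable.prodMk hGae) hsetmeas]
    rfl
  have hae0 : ∀ᵐ w ∂(Measure.map W ℙ), 0 ≤ w :=
    (ae_map_iff hWmeas.aemeasurable measurableSet_Ici).2 (ae_of_all _ hW0)
  set T : ℝ → ℝ := fun w => Real.exp (-w) * ∑ i ∈ Finset.range τ, w ^ i / i.factorial with hT
  have hTc : Continuous T :=
    (Real.continuous_exp.comp continuous_neg).mul
      (continuous_finset_sum _ fun i _ => (continuous_pow i).div_const _)
  have hkey : ℙ {ω | W ω < G ω} = ∫⁻ w, ENNReal.ofReal (T w) ∂(Measure.map W ℙ) := by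
    rw [hset, hmap, hG, Measure.prod_apply hsetmeas]
    refine lintegral_congr_ae (hae0.mono fun w hw => ?_)
    have hpre : Prod.mk w ⁻¹' {p : ℝ × ℝ | p.1 < p.2} = Set.Ioi w := rfl
    show (gammaMeasure (τ:ℝ) 1) (Prod.mk w ⁻¹' {p : ℝ × ℝ | p.1 < p.2}) = ENNReal.ofReal (T w)
    rw [hpre, aux_gamma_tail τ hτ hw]
  have hT0 : 0 ≤ᵐ[Measure.map W ℙ] T := hae0.mono fun w hw => by
    have : 0 ≤ ∑ i ∈ Finset.range τ, w ^ i / i.factorial :=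
      Finset.sum_nonneg fun i _ => by positivity
    positivity
  rw [hkey, ← integral_eq_lintegral_of_nonneg_ae hT0 hTc.aestronglyMeasurable,
    integral_map hWmeas.aemeasurable hTc.aestronglyMeasurable]
  have hint : ∀ i : ℕ, Integrable (fun ω => Real.exp (-(W ω)) * ((W ω) ^ i / i.factorial)) ℙ :=
    fun i => ((aux_integrable hWmeas hW0 i one_pos).div_const (i.factorial : ℝ)).congr
      (ae_of_all _ fun ω => by
        show W ω ^ i * Real.exp (-(1 * W ω)) / (i.factorial : ℝ)
            = Real.exp (-(W ω)) * ((W ω) ^ i / i.factorial)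
        rw [one_mul]; ring)
  have hTW : (fun ω => T (W ω))
      = fun ω => ∑ i ∈ Finset.range τ, Real.exp (-(W ω)) * ((W ω) ^ i / i.factorial) := by
    funext ω
    simp only [hT, Finset.mul_sum]
  rw [hTW, integral_finset_sum _ (fun i _ => hint i)]
  refine Finset.sum_congr rfl fun i _ => ?_
  rw [aux_iterderiv hWmeas hW0 i 1 one_pos]
  have h1 : (fun ω => (-W ω) ^ i * Real.exp (-(1 * W ω)))
      = fun ω => (-1:ℝ) ^ i * ((W ω) ^ i * Real.exp (-(1 * W ω))) :=
    funext fun ω => by rw [neg_pow]; ring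
  rw [h1, integral_const_mul]
  have h2 : (-1:ℝ) ^ i * (-1) ^ i = 1 := by
    rw [← pow_add]; exact Even.neg_one_pow ⟨i, rfl⟩
  have h3 : ∫ ω, Real.exp (-(W ω)) * ((W ω) ^ i / i.factorial) ∂ℙ
      = (∫ ω, (W ω) ^ i * Real.exp (-(1 * W ω)) ∂ℙ) / i.factorial := by
    rw [← integral_div]
    congr 1
    funext ω
    rw [one_mul]
    ring
  rw [h3]
  have h4 : ((-1:ℝ) ^ i / i.factorial) * ((-1) ^ i * (∫ ω, (W ω) ^ i * Real.exp (-(1 * W ω)) ∂ℙ))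
      = ((-1:ℝ) ^ i * (-1) ^ i) * (∫ ω, (W ω) ^ i * Real.exp (-(1 * W ω)) ∂ℙ) / i.factorial := by
    ring
  rw [h4, h2, one_mul]
end

section
/- For all reals α > 2 and b > 0, ∫_0^∞ ( 1 − 1/(1 + b·z^{−α}) ) · z dz = ( π / ( α · sin(2π/α) ) ) · b^{2/α}. -/
/-!
Since `1 - 1 / (1 + b z^{-α}) = b / (z^α + b)`, the substitution `y = z^α` turns the integral
into `(b/α) ∫_0^∞ y^{2/α - 1} / (y + b) dy`, and rescaling `y = b x` into a multiple of the
Mellin transform `∫_0^∞ x^{s-1} / (1 + x) dx` at `s = 2/α ∈ (0, 1)`. The substitution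
`x = t / (1 - t)` identifies the latter with the Beta integral `B(s, 1 - s) = Γ(s) Γ(1 - s)`,
which equals `π / sin (π s)` by Euler's reflection formula.
-/

open MeasureTheory Real Set

theorem integral_rpow_mul_one_sub_rpow_neg {s : ℝ} (hs0 : 0 < s) (hs1 : s < 1) :
    ∫ t in (0 : ℝ)..1, t ^ (s - 1) * (1 - t) ^ (-s) = π / sin (π * s) := by
  have hbeta : Complex.betaIntegral s (1 - s) = ↑(π / sin (π * s)) := by
    rw [← Real.Gamma_mul_Gamma_one_sub, Complex.betaIntegral_eq_Gamma_mul_div _ _ (by simpa)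
      (by simpa), add_sub_cancel, Complex.Gamma_one, div_one]
    push_cast [Complex.Gamma_ofReal]
    rw [← Complex.ofReal_one, ← Complex.ofReal_sub, Complex.Gamma_ofReal]
  have hreal : Complex.betaIntegral s (1 - s)
      = ↑(∫ t in (0 : ℝ)..1, t ^ (s - 1) * (1 - t) ^ (-s)) := by
    rw [Complex.betaIntegral, ← intervalIntegral.integral_ofReal]
    refine intervalIntegral.integral_congr fun t ht => ?_
    rw [uIcc_of_le zero_le_one] at ht
    rw [Complex.ofReal_mul, Complex.ofReal_cpow ht.1, Complex.ofReal_cpow (sub_nonneg.2 ht.2)]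
    push_cast
    ring_nf
  exact_mod_cast hreal.symm.trans hbeta

theorem bijOn_div_one_sub_Ioo : BijOn (fun t : ℝ => t / (1 - t)) (Ioo 0 1) (Ioi 0) := by
  refine InvOn.bijOn (f' := fun x => x / (1 + x)) ⟨fun t ht => ?_, fun x hx => ?_⟩
    (fun t ht => ?_) (fun x hx => ?_)
  · have : 1 - t ≠ 0 := by linarith [ht.2]
    dsimp only
    field_simp
    ring
  · have : 1 + x ≠ 0 := by linarith [mem_Ioi.1 hx]
    dsimp only
    field_simp
    ring
  · exact div_pos ht.1 (sub_pos.2 ht.2)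
  · have hx : 0 < x := hx
    exact ⟨by positivity, (div_lt_one (by positivity)).2 (by linarith)⟩

theorem hasDerivAt_div_one_sub {t : ℝ} (ht : t ≠ 1) :
    HasDerivAt (fun t : ℝ => t / (1 - t)) ((1 - t) ^ 2)⁻¹ t := by
  have h : HasDerivAt (fun t : ℝ => t / (1 - t)) ((1 * (1 - t) - t * -1) / (1 - t) ^ 2) t :=
    (hasDerivAt_id' t).div ((hasDerivAt_id' t).const_sub 1) (sub_ne_zero.2 ht.symm)
  convert h using 1
  ring

theorem integral_Ioi_rpow_div_one_add {s : ℝ} (hs0 : 0 < s) (hs1 : s < 1) :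
    ∫ x in Ioi (0 : ℝ), x ^ (s - 1) / (1 + x) = π / sin (π * s) := by
  have hsubst : ∀ t ∈ Ioo (0 : ℝ) 1,
      |((1 - t) ^ 2)⁻¹| • ((t / (1 - t)) ^ (s - 1) / (1 + t / (1 - t)))
        = t ^ (s - 1) * (1 - t) ^ (-s) := fun t ht => by
    have h1t : 0 < 1 - t := sub_pos.2 ht.2
    rw [abs_of_pos (by positivity), smul_eq_mul, div_rpow ht.1.le h1t.le, rpow_sub_one h1t.ne',
      rpow_neg h1t.le]
    field_simp
    ring
  rw [← bijOn_div_one_sub_Ioo.image_eq,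
    integral_image_eq_integral_abs_deriv_smul measurableSet_Ioo
      (fun t ht => (hasDerivAt_div_one_sub ht.2.ne).hasDerivWithinAt) bijOn_div_one_sub_Ioo.injOn,
    setIntegral_congr_fun measurableSet_Ioo hsubst, ← integral_Ioc_eq_integral_Ioo,
    ← intervalIntegral.integral_of_le zero_le_one]
  exact integral_rpow_mul_one_sub_rpow_neg hs0 hs1

theorem integral_Ioi_rpow_div_add {s c : ℝ} (hs0 : 0 < s) (hs1 : s < 1) (hc : 0 < c) :
    ∫ y in Ioi (0 : ℝ), y ^ (s - 1) / (y + c) = c ^ (s - 1) * (π / sin (π * s)) := by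
  have hscale : ∀ x ∈ Ioi (0 : ℝ), (c * x) ^ (s - 1) / (c * x + c)
      = c ^ (s - 1) / c * (x ^ (s - 1) / (1 + x)) := fun x hx => by
    rw [mul_rpow hc.le (le_of_lt hx)]
    field_simp
    ring
  have := integral_comp_mul_left_Ioi (fun y => y ^ (s - 1) / (y + c)) 0 hc
  rw [mul_zero, setIntegral_congr_fun measurableSet_Ioi hscale, integral_const_mul,
    integral_Ioi_rpow_div_one_add hs0 hs1, smul_eq_mul, eq_inv_mul_iff_mul_eq₀ hc.ne'] at this
  rw [← this]
  field_simp

theorem one_sub_one_div_one_add_mul_rpow_neg_mul {α b z : ℝ} (hα : 0 < α) (hb : 0 < b)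
    (hz : 0 < z) :
    (1 - 1 / (1 + b * z ^ (-α))) * z
      = (α * z ^ (α - 1)) • (b / α * ((z ^ α) ^ (2 / α - 1) / (z ^ α + b))) := by
  have hzα : 0 < z ^ α := rpow_pos_of_pos hz α
  rw [← rpow_mul hz.le, mul_sub, mul_div_cancel₀ _ hα.ne', mul_one, rpow_neg hz.le,
    smul_eq_mul]
  have : z ^ (α - 1) * z ^ (2 - α) = z := by
    rw [← rpow_add hz, show α - 1 + (2 - α) = 1 by ring, rpow_one]
  field_simp
  rw [mul_assoc b, this]
  ring

/-- full-range interference integral.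
For all reals `α > 2` and `b > 0`,
`∫_0^∞ (1 − 1/(1 + b·z^{−α}))·z dz = (π/(α·sin(2π/α)))·b^{2/α}`. -/
theorem stmt_15 (α b : ℝ) (hα : 2 < α) (hb : 0 < b) :
    ∫ z in Set.Ioi (0 : ℝ), (1 - 1 / (1 + b * z ^ (-α))) * z
      = π / (α * Real.sin (2 * π / α)) * b ^ (2 / α) := by
  have hα0 : 0 < α := by linarith
  calc ∫ z in Ioi (0 : ℝ), (1 - 1 / (1 + b * z ^ (-α))) * z
      = ∫ z in Ioi (0 : ℝ),
          (α * z ^ (α - 1)) • (b / α * ((z ^ α) ^ (2 / α - 1) / (z ^ α + b))) :=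
        setIntegral_congr_fun measurableSet_Ioi fun z hz =>
          one_sub_one_div_one_add_mul_rpow_neg_mul hα0 hb hz
    _ = ∫ y in Ioi (0 : ℝ), b / α * (y ^ (2 / α - 1) / (y + b)) :=
        integral_comp_rpow_Ioi_of_pos (g := fun y => b / α * (y ^ (2 / α - 1) / (y + b))) hα0
    _ = b / α * (b ^ (2 / α - 1) * (π / sin (π * (2 / α)))) := by
        rw [integral_const_mul, integral_Ioi_rpow_div_add (by positivity)
          ((div_lt_one hα0).mpr hα) hb]
    _ = π / (α * sin (2 * π / α)) * b ^ (2 / α) := by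
        rw [rpow_sub_one hb.ne', mul_div_assoc' π 2 α, mul_comm π 2]
        field_simp
end
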